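/- Let X be a second countable topological space, E a metrizable space, and H a relatively compact subset of E^X with the product (pointwise convergence) topology. Then sup over f in the pointwise closure of H of frag(f) equals sup over sequences φ in H of the infimum of frag(f) over cluster points f of φ. -/

import Mathlib

open Set Filter Ordinal ENNReal

universe u v

section Defs

variable {X : Type u} {E : Type v}

/-- `f` restricted to `A` is `ε`-fragmented: every nonempty subset of `A` has a relatively
open nonempty piece on which the oscillation (diameter of the image) of `f` is at most `ε`. -/
def EpsFragOn [TopologicalSpace X] [PseudoEMetricSpace E] (f : X → E) (A : Set X)
    (ε : ℝ≥0∞) : Prop :=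
  ∀ F : Set X, F ⊆ A → F.Nonempty → ∃ V : Set X, IsOpen V ∧ (V ∩ F).Nonempty ∧
    EMetric.diam (f '' (V ∩ F)) ≤ ε

/-- The fragmentability index `frag f = inf {ε > 0 : f is ε-fragmented}` (with `inf ∅ = ∞`). -/
noncomputable def fragIdx [TopologicalSpace X] [PseudoEMetricSpace E] (f : X → E) : ℝ≥0∞ :=
  sInf {ε | 0 < ε ∧ EpsFragOn f Set.univ ε}

/-- A set `H` is resolvable: every nonempty `A ⊆ X` has a relatively open nonempty piece
entirely inside `H` or entirely inside its complement. -/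
def Resolvable [TopologicalSpace X] (H : Set X) : Prop :=
  ∀ A : Set X, A.Nonempty → ∃ U : Set X, IsOpen U ∧ (U ∩ A).Nonempty ∧
    (U ∩ A ⊆ H ∨ U ∩ A ⊆ Hᶜ)

/-- The σ-fragmentability index by resolvable sets. -/
noncomputable def sfragIdx [TopologicalSpace X] [PseudoEMetricSpace E] (f : X → E) : ℝ≥0∞ :=
  sInf {ε | 0 < ε ∧ ∃ H : ℕ → Set X, (∀ n, Resolvable (H n)) ∧ (⋃ n, H n) = Set.univ ∧
    ∀ n, EpsFragOn f (H n) ε}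

/-- `g` is constant on each set of some resolvable partition of `X`, i.e. on each difference
`U (γ+1) \ U γ` of an increasing transfinite sequence of open sets from `∅` to `X`,
continuous at limit ordinals. -/
def ConstOnResolvablePartition [TopologicalSpace X] (g : X → E) : Prop :=
  ∃ (κ : Ordinal.{u}) (U : Ordinal.{u} → Set X),
    (∀ α, IsOpen (U α)) ∧ (∀ α β : Ordinal, α ≤ β → U α ⊆ U β) ∧
    U 0 = ∅ ∧ U κ = Set.univ ∧
    (∀ γ, γ ≤ κ → Order.IsSuccLimit γ → U γ = ⋃ α < γ, U α) ∧
    (∀ γ < κ, ∀ x ∈ U (γ + 1) \ U γ, ∀ y ∈ U (γ + 1) \ U γ, g x = g y)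

/-- The transfinite derivation of open sets in the definition of the oscillation rank
`β(f, ε)`:  `U 0 = ∅`, `U (α+1) = U α ∪ {x ∉ U α : ∃ open V ∋ x, diam f (V \ U α) < ε}`,
and unions at limit ordinals. -/
noncomputable def oscSet [TopologicalSpace X] [PseudoEMetricSpace E] (f : X → E)
    (ε : ℝ≥0∞) (o : Ordinal.{u}) : Set X :=
  Ordinal.limitRecOn o ∅
    (fun _ U => U ∪ {x | x ∉ U ∧ ∃ V : Set X, IsOpen V ∧ x ∈ V ∧
      EMetric.diam (f '' (V \ U)) < ε})
    (fun γ _ ih => ⋃ (β : Ordinal) (h : β < γ), ih β h)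

/-- `f` has countable oscillation rank: `β(f) < ω₁`, i.e. for every `ε > 0` the derivation
reaches `X` at some countable ordinal. -/
def CountableOscRank [TopologicalSpace X] [PseudoEMetricSpace E] (f : X → E) : Prop :=
  ∀ ε : ℝ≥0∞, 0 < ε → ∃ α < ω₁, oscSet f ε α = Set.univ

/-- A transfinite sequence `(V α)_{α ≤ κ}` of open sets has property `*(f, ε)`. -/
def StarProp [TopologicalSpace X] [PseudoEMetricSpace E] (f : X → E) (ε : ℝ≥0∞)
    (κ : Ordinal.{u}) (V : Ordinal.{u} → Set X) : Prop :=
  (∀ α, α ≤ κ → IsOpen (V α)) ∧ (∀ α β : Ordinal, α ≤ β → β ≤ κ → V α ⊆ V β) ∧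
  V 0 = ∅ ∧ V κ = Set.univ ∧
  (∀ γ, γ ≤ κ → Order.IsSuccLimit γ → V γ = ⋃ α < γ, V α) ∧
  (∀ α < κ, ∀ x ∈ V (α + 1) \ V α, ∃ W : Set X, IsOpen W ∧ x ∈ W ∧
    EMetric.diam (f '' (W \ V α)) < ε)

/-- Uniform distance `d(f, g) = sup_x ρ(f x, g x)` (in `[0, ∞]`). -/
noncomputable def unifDist [PseudoEMetricSpace E] (f g : X → E) : ℝ≥0∞ :=
  ⨆ x, edist (f x) (g x)

/-- Distance from `f` to the family of σ-fragmented mappings. -/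
noncomputable def distToSFrag [TopologicalSpace X] [PseudoEMetricSpace E] (f : X → E) : ℝ≥0∞ :=
  ⨅ (g : {g : X → E // sfragIdx g = 0}), unifDist f g.1

end Defs

open Topology

/-!
If `f` lies in the pointwise closure of `H` and is not `ε`-fragmented, some nonempty `F ⊆ X`
has oscillation of `f` above `ε` on each of its relatively open nonempty pieces. Second
countability shrinks `F` to a countable set `C` with the same property, and `f` is then a
pointwise limit on `C` of a sequence in `H`. Every cluster point of that sequence agrees with
`f` on `C`, so it is not `δ`-fragmented for `δ < ε` either. The reverse inequality holds because
every sequence in `H` clusters at a point of the compact closure.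
-/

theorem exists_edist_gt_of_lt_ediam_image {α E : Type*} [PseudoEMetricSpace E] {f : α → E}
    {s : Set α} {ε : ℝ≥0∞} (h : ε < Metric.ediam (f '' s)) :
    ∃ x ∈ s, ∃ y ∈ s, ε < edist (f x) (f y) := by
  simpa only [← not_le, Metric.ediam_image_le_iff, not_forall, exists_prop] using h

section Oscillation

variable {X E : Type*} [TopologicalSpace X] [PseudoEMetricSpace E]

def OscillatesOn (f : X → E) (C : Set X) (ε : ℝ≥0∞) : Prop :=
  ∀ V : Set X, IsOpen V → (V ∩ C).Nonempty → ε < Metric.ediam (f '' (V ∩ C))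

theorem exists_oscillatesOn_of_not_epsFragOn {f : X → E} {ε : ℝ≥0∞}
    (h : ¬ EpsFragOn f univ ε) : ∃ F : Set X, F.Nonempty ∧ OscillatesOn f F ε := by
  simp only [EpsFragOn, not_forall, not_exists, not_and, not_le] at h
  obtain ⟨F, -, hF, hosc⟩ := h
  exact ⟨F, hF, hosc⟩

theorem OscillatesOn.congr {f g : X → E} {C : Set X} {ε : ℝ≥0∞} (h : OscillatesOn f C ε)
    (hfg : EqOn f g C) : OscillatesOn g C ε := fun V hV hne => by
  rw [← (hfg.mono inter_subset_right).image_eq]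
  exact h V hV hne

theorem OscillatesOn.exists_countable [SecondCountableTopology X] {f : X → E} {F : Set X}
    {ε : ℝ≥0∞} (h : OscillatesOn f F ε) (hF : F.Nonempty) :
    ∃ C ⊆ F, C.Countable ∧ C.Nonempty ∧ OscillatesOn f C ε := by
  have hB := TopologicalSpace.isBasis_countableBasis X
  set T := {b ∈ TopologicalSpace.countableBasis X | (b ∩ F).Nonempty}
  have : Countable T :=
    ((TopologicalSpace.countable_countableBasis X).mono (sep_subset _ _)).to_subtype
  have hpair (b : T) : ∃ p : X × X, p.1 ∈ (b : Set X) ∩ F ∧ p.2 ∈ (b : Set X) ∩ F ∧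
      ε < edist (f p.1) (f p.2) := by
    obtain ⟨x, hx, y, hy, hxy⟩ :=
      exists_edist_gt_of_lt_ediam_image (h b (hB.isOpen b.2.1) b.2.2)
    exact ⟨(x, y), hx, hy, hxy⟩
  choose q hq₁ hq₂ hq using hpair
  -- `C` holds a witnessing pair inside every basic open set that meets `F`.
  refine ⟨range (fun b => (q b).1) ∪ range (fun b => (q b).2), ?_,
    (countable_range _).union (countable_range _), ?_, ?_⟩
  · rintro _ (⟨b, rfl⟩ | ⟨b, rfl⟩)
    exacts [(hq₁ b).2, (hq₂ b).2]
  · obtain ⟨x, hx⟩ := hF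
    obtain ⟨b, hb, hxb, -⟩ := hB.exists_subset_of_mem_open (mem_univ x) isOpen_univ
    exact ⟨_, Or.inl (mem_range_self ⟨b, hb, x, hxb, hx⟩)⟩
  · rintro V hV ⟨z, hzV, hzC⟩
    have hzF : z ∈ F := by
      rcases hzC with ⟨b, rfl⟩ | ⟨b, rfl⟩
      exacts [(hq₁ b).2, (hq₂ b).2]
    obtain ⟨b, hb, hzb, hbV⟩ := hB.exists_subset_of_mem_open hzV hV
    let b' : T := ⟨b, hb, z, hzb, hzF⟩
    calc ε < edist (f (q b').1) (f (q b').2) := hq b'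
      _ ≤ Metric.ediam (f '' (V ∩ _)) :=
        Metric.edist_le_ediam_of_mem
          (mem_image_of_mem f ⟨hbV (hq₁ b').1, Or.inl (mem_range_self b')⟩)
          (mem_image_of_mem f ⟨hbV (hq₂ b').1, Or.inr (mem_range_self b')⟩)

theorem OscillatesOn.le_fragIdx {f : X → E} {C : Set X} {ε : ℝ≥0∞} (h : OscillatesOn f C ε)
    (hC : C.Nonempty) : ε ≤ fragIdx f := by
  refine le_sInf fun δ ⟨_, hδ⟩ => ?_
  obtain ⟨V, hV, hne, hdiam⟩ := hδ C (subset_univ C) hC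
  exact (h V hV hne).le.trans hdiam

theorem fragIdx_le_of_epsFragOn {f : X → E} {ε : ℝ≥0∞} (hε : 0 < ε)
    (h : EpsFragOn f univ ε) : fragIdx f ≤ ε :=
  sInf_le ⟨hε, h⟩

end Oscillation

theorem exists_seq_tendsto_on_of_mem_closure {X E : Type*} [TopologicalSpace E]
    [FirstCountableTopology E] {H : Set (X → E)} {f : X → E} (hf : f ∈ closure H)
    {C : Set X} (hC : C.Countable) :
    ∃ φ : ℕ → X → E, (∀ n, φ n ∈ H) ∧ ∀ x ∈ C, Tendsto (fun n => φ n x) atTop (𝓝 (f x)) := by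
  have : Countable C := hC.to_subtype
  let restrict : (X → E) → (C → E) := fun g x => g x
  have hrestrict : Continuous restrict := continuous_pi fun x => continuous_apply (x : X)
  obtain ⟨u, hu, hlim⟩ :=
    mem_closure_iff_seq_limit.mp (map_mem_closure hrestrict hf (mapsTo_image restrict H))
  choose φ hφH hφ using hu
  refine ⟨φ, hφH, fun x hx => ?_⟩
  simpa only [← hφ] using tendsto_pi_nhds.mp hlim ⟨x, hx⟩

theorem MapClusterPt.eqOn_of_tendsto {X E ι : Type*} [TopologicalSpace E] [T2Space E]
    {l : Filter ι} {φ : ι → X → E} {f g : X → E} {C : Set X} (hg : MapClusterPt g l φ)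
    (hφ : ∀ x ∈ C, Tendsto (fun n => φ n x) l (𝓝 (f x))) : EqOn g f C := fun x hx =>
  eq_of_nhds_neBot <|
    ((hg.continuousAt_comp (continuous_apply x).continuousAt).clusterPt.mono (hφ x hx))

theorem exists_seq_forall_mapClusterPt_le_fragIdx {X E : Type*} [TopologicalSpace X]
    [SecondCountableTopology X] [EMetricSpace E] {H : Set (X → E)} {f : X → E}
    (hf : f ∈ closure H) {ε : ℝ≥0∞} (hε : ¬ EpsFragOn f univ ε) :
    ∃ φ : ℕ → X → E, (∀ n, φ n ∈ H) ∧ ∀ g, MapClusterPt g atTop φ → ε ≤ fragIdx g := by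
  obtain ⟨F, hF, hosc⟩ := exists_oscillatesOn_of_not_epsFragOn hε
  obtain ⟨C, -, hC, hCne, hoscC⟩ := hosc.exists_countable hF
  obtain ⟨φ, hφH, hφ⟩ := exists_seq_tendsto_on_of_mem_closure hf hC
  exact ⟨φ, hφH, fun g hg => (hoscC.congr (hg.eqOn_of_tendsto hφ).symm).le_fragIdx hCne⟩

/-- for `X` second countable, `E` metrizable and `H` relatively compact in
`(E^X, τ_p)`, the sup of `frag` over the pointwise closure of `H` equals the sup over
sequences in `H` of the inf of `frag` over their cluster points. -/
theorem stmt_19 {X E : Type*} [TopologicalSpace X] [SecondCountableTopology X]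
    [MetricSpace E] (H : Set (X → E)) (hH : IsCompact (closure H)) :
    ⨆ f ∈ closure H, fragIdx f =
      ⨆ (phi : ℕ → X → E) (_ : ∀ n, phi n ∈ H),
        ⨅ (f : X → E) (_ : MapClusterPt f Filter.atTop phi), fragIdx f := by
  apply le_antisymm
  · refine iSup₂_le fun f hf => le_of_forall_lt fun c hc => ?_
    obtain ⟨ε, hcε, hε⟩ := exists_between hc
    have hnot : ¬ EpsFragOn f univ ε := fun h =>
      (fragIdx_le_of_epsFragOn (pos_of_gt hcε) h).not_gt hε
    obtain ⟨φ, hφH, hφ⟩ := exists_seq_forall_mapClusterPt_le_fragIdx hf hnot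
    exact hcε.trans_le (le_iSup₂_of_le φ hφH (le_iInf₂ hφ))
  · refine iSup₂_le fun φ hφH => ?_
    obtain ⟨g, hgH, hg⟩ := hH.exists_mapClusterPt_of_frequently
      (Frequently.of_forall (f := atTop) fun n => subset_closure (hφH n))
    exact (iInf₂_le g hg).trans (le_iSup₂_of_le g hgH le_rfl)
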